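/- Let {σ_t}_{t≥1} and {β_t}_{t≥1} be sequences of non-negative real numbers with {β_t} non-decreasing, let ρ, γ > 0, and let {x_t}_{t≥1} ⊂ ℝ^d with ‖x_t‖_2 ≤ 1 for all t. Define recursively Z_1 = I, σ̄_t = max{ σ_t, ρ, γ · ‖x_t‖_{Z_t^{-1}}^{1/2} }, and Z_{t+1} = Z_t + x_t x_tᵀ / σ̄_t² for all t ≥ 1. Let ι = log(1 + T/(d ρ²)). Then for every T ≥ 1: ∑_{t=1}^T min{ 1, β_t ‖x_t‖_{Z_t^{-1}} } ≤ 2 d ι + 2 β_T γ² d ι + 2 √(d ι) · √( ∑_{t=1}^T β_t² (σ_t² + ρ²) ). -/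

import Mathlib

open Matrix Finset

/-- The weighted norm `‖x‖_A = √(xᵀ A x)`. -/
noncomputable def quadNorm {d : ℕ} (A : Matrix (Fin d) (Fin d) ℝ) (x : Fin d → ℝ) : ℝ :=
  Real.sqrt (x ⬝ᵥ A *ᵥ x)

/-- The Euclidean (ℓ₂) norm of a vector in ℝ^d. -/
noncomputable def l2norm {d : ℕ} (x : Fin d → ℝ) : ℝ :=
  Real.sqrt (∑ i, x i ^ 2)

/-!
With `u_t = ‖x_t‖²_{Z_t⁻¹} / σ̄_t²`, the matrix determinant lemma gives
`det Z_{T+1} = ∏_t (1 + u_t)`, and AM-GM on the eigenvalues bounds this by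
`(tr Z_{T+1} / d)^d ≤ (1 + T/(dρ²))^d`. As `min 1 u ≤ 2 log (1 + u)`, this is the elliptical
potential bound `∑_t min 1 u_t ≤ 2dι`.

Each summand `min 1 (β_t ‖x_t‖_{Z_t⁻¹})` is at most
`(1 + β_T γ²) min 1 u_t + β_t √(σ_t² + ρ²) √(min 1 u_t)`:
either `σ̄_t ≤ √(σ_t² + ρ²)`, or `σ̄_t` is attained by `γ ‖x_t‖^{1/2}`,
in which case `‖x_t‖_{Z_t⁻¹} ≤ γ² u_t`.
Cauchy-Schwarz on the second part then gives the `√(dι)` term.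
-/

open Real

lemma min_one_le_two_mul_log_one_add {u : ℝ} (hu : 0 ≤ u) : min 1 u ≤ 2 * log (1 + u) := by
  have hlog := one_sub_inv_le_log_of_pos (by positivity : 0 < 1 + u)
  have hmin : min 1 u * (1 + u) ≤ 2 * u := by
    rcases le_total u 1 with h | h
    · rw [min_eq_right h]; nlinarith
    · rw [min_eq_left h]; linarith
  have : 1 - (1 + u)⁻¹ = u / (1 + u) := by field_simp; ring
  rw [this] at hlog
  calc min 1 u ≤ 2 * (u / (1 + u)) := by
        rw [mul_div_assoc', le_div_iff₀ (by positivity)]; exact hmin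
    _ ≤ 2 * log (1 + u) := by gcongr

lemma Real.prod_le_sum_div_card_pow {ι : Type*} (s : Finset ι) {z : ι → ℝ}
    (hz : ∀ i ∈ s, 0 ≤ z i) :
    ∏ i ∈ s, z i ≤ ((∑ i ∈ s, z i) / #s) ^ #s := by
  rcases s.eq_empty_or_nonempty with rfl | hs
  · simp
  have hcard : (0 : ℝ) < #s := by exact_mod_cast hs.card_pos
  have hprod : 0 ≤ ∏ i ∈ s, z i := prod_nonneg hz
  have amgm := geom_mean_le_arith_mean s (fun _ ↦ 1) z (fun _ _ ↦ zero_le_one)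
    (by simpa using hcard) hz
  simp only [rpow_one, sum_const, nsmul_eq_mul, mul_one, one_mul] at amgm
  calc ∏ i ∈ s, z i = ((∏ i ∈ s, z i) ^ ((#s : ℝ)⁻¹)) ^ #s := by
        rw [← rpow_natCast, ← rpow_mul hprod, inv_mul_cancel₀ hcard.ne', rpow_one]
    _ ≤ _ := by gcongr

lemma Matrix.PosSemidef.det_le_trace_div_pow {n : Type*} [Fintype n] [DecidableEq n]
    {A : Matrix n n ℝ} (hA : A.PosSemidef) :
    A.det ≤ (A.trace / Fintype.card n) ^ Fintype.card n := by
  rw [hA.isHermitian.det_eq_prod_eigenvalues, hA.isHermitian.trace_eq_sum_eigenvalues]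
  simpa using Real.prod_le_sum_div_card_pow univ fun i _ ↦ hA.eigenvalues_nonneg i

lemma Matrix.det_add_smul_vecMulVec_self {n : Type*} [Fintype n] [DecidableEq n] {R : Type*}
    [CommRing R] {A : Matrix n n R} (hA : IsUnit A.det) (c : R) (v : n → R) :
    (A + c • vecMulVec v v).det = A.det * (1 + c * (v ⬝ᵥ A⁻¹ *ᵥ v)) := by
  rw [← smul_vecMulVec, vecMulVec_eq Unit, det_add_replicateCol_mul_replicateRow hA,
    det_unique (n := Unit), Matrix.mul_assoc, ← replicateCol_mulVec]
  simp [mulVec_smul]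

lemma Matrix.posSemidef_smul_vecMulVec_self {n : Type*} [Fintype n] {c : ℝ} (hc : 0 ≤ c)
    (v : n → ℝ) :
    (c • vecMulVec v v).PosSemidef := by
  simpa using (posSemidef_vecMulVec_self_star v).smul hc

section RankOneUpdates

variable {n : Type*} [Fintype n] [DecidableEq n] {Z : ℕ → Matrix n n ℝ} {c : ℕ → ℝ}
  {x : ℕ → n → ℝ}

theorem posDef_of_rankOneUpdates (hZ1 : Z 1 = 1) (hc : ∀ t, 1 ≤ t → 0 ≤ c t)
    (hZrec : ∀ t, 1 ≤ t → Z (t + 1) = Z t + c t • vecMulVec (x t) (x t)) :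
    ∀ t, 1 ≤ t → (Z t).PosDef := by
  intro t ht
  induction t, ht using Nat.le_induction with
  | base => rw [hZ1]; exact PosDef.one
  | succ t ht ih =>
    rw [hZrec t ht]
    exact ih.add_posSemidef (posSemidef_smul_vecMulVec_self (hc t ht) _)

theorem det_of_rankOneUpdates (hZ1 : Z 1 = 1) (hc : ∀ t, 1 ≤ t → 0 ≤ c t)
    (hZrec : ∀ t, 1 ≤ t → Z (t + 1) = Z t + c t • vecMulVec (x t) (x t)) (T : ℕ) :
    (Z (T + 1)).det = ∏ t ∈ Icc 1 T, (1 + c t * (x t ⬝ᵥ (Z t)⁻¹ *ᵥ x t)) := by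
  induction T with
  | zero => simp [hZ1]
  | succ T ih =>
    have hT : 1 ≤ T + 1 := Nat.le_add_left 1 T
    rw [prod_Icc_succ_top hT, ← ih, hZrec _ hT, det_add_smul_vecMulVec_self
      (posDef_of_rankOneUpdates hZ1 hc hZrec _ hT).det_pos.ne'.isUnit]

theorem trace_of_rankOneUpdates (hZ1 : Z 1 = 1)
    (hZrec : ∀ t, 1 ≤ t → Z (t + 1) = Z t + c t • vecMulVec (x t) (x t)) (T : ℕ) :
    (Z (T + 1)).trace = Fintype.card n + ∑ t ∈ Icc 1 T, c t * (x t ⬝ᵥ x t) := by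
  induction T with
  | zero => simp [hZ1]
  | succ T ih =>
    have hT : 1 ≤ T + 1 := Nat.le_add_left 1 T
    rw [sum_Icc_succ_top hT, hZrec _ hT, trace_add, ih, trace_smul, trace_vecMulVec, smul_eq_mul,
      add_assoc]

theorem sum_min_one_le_of_rankOneUpdates (hZ1 : Z 1 = 1) (hc : ∀ t, 1 ≤ t → 0 ≤ c t)
    (hZrec : ∀ t, 1 ≤ t → Z (t + 1) = Z t + c t • vecMulVec (x t) (x t)) {L : ℝ}
    (hL : ∀ t, 1 ≤ t → c t * (x t ⬝ᵥ x t) ≤ L) (T : ℕ) :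
    ∑ t ∈ Icc 1 T, min 1 (c t * (x t ⬝ᵥ (Z t)⁻¹ *ᵥ x t)) ≤
      2 * Fintype.card n * log (1 + T * L / Fintype.card n) := by
  set k : ℝ := (Fintype.card n : ℝ)
  have hpos := posDef_of_rankOneUpdates hZ1 hc hZrec
  have hZT := hpos (T + 1) (Nat.le_add_left 1 T)
  have hu : ∀ t ∈ Icc 1 T, 0 ≤ c t * (x t ⬝ᵥ (Z t)⁻¹ *ᵥ x t) := fun t ht ↦
    mul_nonneg (hc t (mem_Icc.1 ht).1)
      ((hpos t (mem_Icc.1 ht).1).inv.posSemidef.dotProduct_mulVec_nonneg _)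
  have htrace : (Z (T + 1)).trace / k ≤ 1 + T * L / k := by
    rw [trace_of_rankOneUpdates hZ1 hZrec, add_div]
    gcongr
    · exact div_self_le_one k
    · simpa using sum_le_card_nsmul (Icc 1 T) _ L fun t ht ↦ hL t (mem_Icc.1 ht).1
  have hdet : (Z (T + 1)).det ≤ (1 + T * L / k) ^ Fintype.card n :=
    hZT.posSemidef.det_le_trace_div_pow.trans <| pow_le_pow_left₀
      (div_nonneg hZT.posSemidef.trace_nonneg (Nat.cast_nonneg _)) htrace _
  calc ∑ t ∈ Icc 1 T, min 1 (c t * (x t ⬝ᵥ (Z t)⁻¹ *ᵥ x t))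
      ≤ ∑ t ∈ Icc 1 T, 2 * log (1 + c t * (x t ⬝ᵥ (Z t)⁻¹ *ᵥ x t)) :=
        sum_le_sum fun t ht ↦ min_one_le_two_mul_log_one_add (hu t ht)
    _ = 2 * log (Z (T + 1)).det := by
        rw [← mul_sum, det_of_rankOneUpdates hZ1 hc hZrec,
          log_prod fun t ht ↦ by linarith [hu t ht]]
    _ ≤ 2 * (k * log (1 + T * L / k)) := by
        rw [← log_pow]
        gcongr
        exact hZT.det_pos
    _ = 2 * k * log (1 + T * L / k) := by ring

end RankOneUpdates

theorem min_one_mul_le_of_eq_max {β B σ ρ γ w s : ℝ} (hβ : 0 ≤ β) (hβB : β ≤ B)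
    (hρ : 0 < ρ) (hw : 0 ≤ w) (hs : s = max σ (max ρ (γ * √w))) :
    min 1 (β * w) ≤ (1 + B * γ ^ 2) * min 1 (w ^ 2 / s ^ 2) +
      √(β ^ 2 * (σ ^ 2 + ρ ^ 2)) * √(min 1 (w ^ 2 / s ^ 2)) := by
  have hs0 : 0 < s := hρ.trans_le (hs ▸ le_max_of_le_right (le_max_left _ _))
  have hB : 0 ≤ B * γ ^ 2 := by have := hβ.trans hβB; positivity
  set u := w ^ 2 / s ^ 2
  rcases le_total 1 u with hu | hu
  · rw [min_eq_left hu, sqrt_one]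
    have := min_le_left 1 (β * w)
    nlinarith [sqrt_nonneg (β ^ 2 * (σ ^ 2 + ρ ^ 2))]
  rw [min_eq_right hu]
  have hsqrt_u : √u = w / s := by rw [sqrt_div' _ (sq_nonneg s), sqrt_sq hw, sqrt_sq hs0.le]
  have hsplit : s ≤ √(σ ^ 2 + ρ ^ 2) ∨ s ≤ γ * √w := by
    rw [← le_max_iff, hs, ← max_assoc]
    refine max_le_max_right _ (max_le ?_ ?_) <;> apply le_sqrt_of_sq_le <;> nlinarith
  have hβw : β * w ≤ B * γ ^ 2 * u + √(β ^ 2 * (σ ^ 2 + ρ ^ 2)) * √u := by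
    rcases hsplit with h | h
    · calc β * w = β * s * √u := by rw [hsqrt_u]; field_simp
        _ ≤ β * √(σ ^ 2 + ρ ^ 2) * √u := by gcongr
        _ = √(β ^ 2 * (σ ^ 2 + ρ ^ 2)) * √u := by rw [sqrt_mul (sq_nonneg β), sqrt_sq hβ]
        _ ≤ _ := le_add_of_nonneg_left (by positivity)
    · have hsγ : s ^ 2 ≤ γ ^ 2 * w := by
        calc s ^ 2 ≤ (γ * √w) ^ 2 := pow_le_pow_left₀ hs0.le h 2
          _ = γ ^ 2 * w := by rw [mul_pow, sq_sqrt hw]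
      have hwu : w ≤ γ ^ 2 * u := by
        rw [mul_div_assoc', le_div_iff₀ (by positivity)]; nlinarith
      calc β * w ≤ B * (γ ^ 2 * u) := mul_le_mul hβB hwu hw (hβ.trans hβB)
        _ ≤ _ := by rw [← mul_assoc]; exact le_add_of_nonneg_right (by positivity)
  calc min 1 (β * w) ≤ β * w := min_le_right _ _
    _ ≤ _ := by linarith [show 0 ≤ u by positivity]

lemma sum_sqrt_mul_sqrt_le_of_nonneg_on {ι : Type*} (s : Finset ι) {f g : ι → ℝ}
    (hf : ∀ i ∈ s, 0 ≤ f i) (hg : ∀ i ∈ s, 0 ≤ g i) :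
    ∑ i ∈ s, √(f i) * √(g i) ≤ √(∑ i ∈ s, f i) * √(∑ i ∈ s, g i) := by
  have := sum_mul_le_sqrt_mul_sqrt s (fun i ↦ √(f i)) (fun i ↦ √(g i))
  rwa [sum_congr rfl fun i hi ↦ sq_sqrt (hf i hi), sum_congr rfl fun i hi ↦ sq_sqrt (hg i hi)]
    at this

lemma sum_le_mul_add_sqrt_mul_sqrt {ι : Type*} {s : Finset ι} {a b m : ι → ℝ} {A M : ℝ}
    (hA : 0 ≤ A) (hb : ∀ i ∈ s, 0 ≤ b i) (hm : ∀ i ∈ s, 0 ≤ m i)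
    (hM : ∑ i ∈ s, m i ≤ M) (h : ∀ i ∈ s, a i ≤ A * m i + √(b i) * √(m i)) :
    ∑ i ∈ s, a i ≤ A * M + √(∑ i ∈ s, b i) * √M :=
  calc ∑ i ∈ s, a i ≤ A * ∑ i ∈ s, m i + ∑ i ∈ s, √(b i) * √(m i) := by
        rw [mul_sum, ← sum_add_distrib]; exact sum_le_sum h
    _ ≤ A * M + √(∑ i ∈ s, b i) * √(∑ i ∈ s, m i) := by
        gcongr; exact sum_sqrt_mul_sqrt_le_of_nonneg_on s hb hm
    _ ≤ A * M + √(∑ i ∈ s, b i) * √M := by gcongr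

lemma l2norm_sq {d : ℕ} (x : Fin d → ℝ) : l2norm x ^ 2 = x ⬝ᵥ x := by
  rw [l2norm, sq_sqrt (by positivity), dotProduct]
  simp only [sq]

lemma quadNorm_sq {d : ℕ} {A : Matrix (Fin d) (Fin d) ℝ} (hA : A.PosSemidef) (x : Fin d → ℝ) :
    quadNorm A x ^ 2 = x ⬝ᵥ A *ᵥ x :=
  sq_sqrt (hA.dotProduct_mulVec_nonneg x)

theorem stmt13_general {d : ℕ} (σ β : ℕ → ℝ) (hβ : ∀ t, 0 ≤ β t)
    (hβmono : Monotone β) (ρ γ : ℝ) (hρ : 0 < ρ)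
    (x : ℕ → Fin d → ℝ) (hx : ∀ t, l2norm (x t) ≤ 1)
    (Z : ℕ → Matrix (Fin d) (Fin d) ℝ) (σbar : ℕ → ℝ)
    (hZ1 : Z 1 = 1)
    (hσbar : ∀ t, 1 ≤ t →
      σbar t = max (σ t) (max ρ (γ * Real.sqrt (quadNorm ((Z t)⁻¹) (x t)))))
    (hZrec : ∀ t, 1 ≤ t → Z (t + 1) = Z t + (1 / σbar t ^ 2) • vecMulVec (x t) (x t)) :
    ∀ T : ℕ, 1 ≤ T →
      ∑ t ∈ Finset.Icc 1 T, min 1 (β t * quadNorm ((Z t)⁻¹) (x t)) ≤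
        2 * d * Real.log (1 + (T : ℝ) / (d * ρ ^ 2)) +
          2 * β T * γ ^ 2 * d * Real.log (1 + (T : ℝ) / (d * ρ ^ 2)) +
          2 * Real.sqrt (d * Real.log (1 + (T : ℝ) / (d * ρ ^ 2))) *
            Real.sqrt (∑ t ∈ Finset.Icc 1 T, β t ^ 2 * (σ t ^ 2 + ρ ^ 2)) := by
  intro T _
  set ι := log (1 + T / (d * ρ ^ 2))
  set u : ℕ → ℝ := fun t ↦ 1 / σbar t ^ 2 * (x t ⬝ᵥ (Z t)⁻¹ *ᵥ x t)
  have hpos := posDef_of_rankOneUpdates hZ1 (fun t _ ↦ by positivity) hZrec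
  have hL : ∀ t, 1 ≤ t → 1 / σbar t ^ 2 * (x t ⬝ᵥ x t) ≤ 1 / ρ ^ 2 := fun t ht ↦ by
    have hρσ : ρ ≤ σbar t := hσbar t ht ▸ le_max_of_le_right (le_max_left _ _)
    rw [← l2norm_sq]
    exact (mul_le_of_le_one_right (by positivity) (pow_le_one₀ (sqrt_nonneg _) (hx t))).trans
      (one_div_le_one_div_of_le (by positivity) (pow_le_pow_left₀ hρ.le hρσ 2))
  have hS : ∑ t ∈ Icc 1 T, min 1 (u t) ≤ 2 * d * ι := by
    have := sum_min_one_le_of_rankOneUpdates hZ1 (fun t _ ↦ by positivity) hZrec hL T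
    rwa [Fintype.card_fin, mul_one_div, div_div, mul_comm (ρ ^ 2)] at this
  have hpoint : ∀ t ∈ Icc 1 T, min 1 (β t * quadNorm (Z t)⁻¹ (x t)) ≤
      (1 + β T * γ ^ 2) * min 1 (u t) +
        √(β t ^ 2 * (σ t ^ 2 + ρ ^ 2)) * √(min 1 (u t)) := by
    intro t ht
    have hu : u t = quadNorm (Z t)⁻¹ (x t) ^ 2 / σbar t ^ 2 := by
      rw [quadNorm_sq (hpos t (mem_Icc.1 ht).1).inv.posSemidef]
      exact one_div_mul_eq_div _ _
    rw [hu]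
    exact min_one_mul_le_of_eq_max (hβ t) (hβmono (mem_Icc.1 ht).2) hρ (sqrt_nonneg _)
      (hσbar t (mem_Icc.1 ht).1)
  have hu : ∀ t ∈ Icc 1 T, 0 ≤ min 1 (u t) := fun t ht ↦ le_min zero_le_one <| mul_nonneg
    (by positivity) ((hpos t (mem_Icc.1 ht).1).inv.posSemidef.dotProduct_mulVec_nonneg _)
  have hdι : 0 ≤ d * ι :=
    mul_nonneg d.cast_nonneg (log_nonneg (le_add_of_nonneg_right (by positivity)))
  have hsqrt : √(2 * d * ι) ≤ 2 * √(d * ι) :=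
    calc √(2 * d * ι) ≤ √(2 ^ 2 * (d * ι)) := sqrt_le_sqrt (by nlinarith)
      _ = 2 * √(d * ι) := by rw [sqrt_mul (by norm_num), sqrt_sq (by norm_num)]
  calc ∑ t ∈ Icc 1 T, min 1 (β t * quadNorm (Z t)⁻¹ (x t))
      ≤ (1 + β T * γ ^ 2) * (2 * d * ι) +
          √(∑ t ∈ Icc 1 T, β t ^ 2 * (σ t ^ 2 + ρ ^ 2)) * √(2 * d * ι) :=
        sum_le_mul_add_sqrt_mul_sqrt (by have := hβ T; positivity)
          (fun t _ ↦ by have := hβ t; positivity) hu hS hpoint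
    _ ≤ _ := by grw [hsqrt]; linarith

/-- Weighted elliptical potential lemma (Lemma B.1 in Zhou & Gu): with
`Z_1 = I`, `σ̄_t = max{σ_t, ρ, γ‖x_t‖_{Z_t⁻¹}^{1/2}}`, `Z_{t+1} = Z_t + x_t x_tᵀ/σ̄_t²`,
and `ι = log(1 + T/(dρ²))`, it holds for every `T ≥ 1` that
`∑_{t=1}^T min{1, β_t ‖x_t‖_{Z_t⁻¹}} ≤ 2dι + 2β_T γ² dι + 2√(dι) √(∑_t β_t²(σ_t² + ρ²))`. -/
theorem stmt13 {d : ℕ} (σ β : ℕ → ℝ) (hσ : ∀ t, 0 ≤ σ t) (hβ : ∀ t, 0 ≤ β t)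
    (hβmono : Monotone β) (ρ γ : ℝ) (hρ : 0 < ρ) (hγ : 0 < γ)
    (x : ℕ → Fin d → ℝ) (hx : ∀ t, l2norm (x t) ≤ 1)
    (Z : ℕ → Matrix (Fin d) (Fin d) ℝ) (σbar : ℕ → ℝ)
    (hZ1 : Z 1 = 1)
    (hσbar : ∀ t, 1 ≤ t →
      σbar t = max (σ t) (max ρ (γ * Real.sqrt (quadNorm ((Z t)⁻¹) (x t)))))
    (hZrec : ∀ t, 1 ≤ t → Z (t + 1) = Z t + (1 / σbar t ^ 2) • vecMulVec (x t) (x t)) :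
    ∀ T : ℕ, 1 ≤ T →
      ∑ t ∈ Finset.Icc 1 T, min 1 (β t * quadNorm ((Z t)⁻¹) (x t)) ≤
        2 * d * Real.log (1 + (T : ℝ) / (d * ρ ^ 2)) +
          2 * β T * γ ^ 2 * d * Real.log (1 + (T : ℝ) / (d * ρ ^ 2)) +
          2 * Real.sqrt (d * Real.log (1 + (T : ℝ) / (d * ρ ^ 2))) *
            Real.sqrt (∑ t ∈ Finset.Icc 1 T, β t ^ 2 * (σ t ^ 2 + ρ ^ 2)) :=
  stmt13_general σ β hβ hβmono ρ γ hρ x hx Z σbar hZ1 hσbar hZrec
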